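/- There is no regular dodecahedron all of whose 20 vertices have integer coordinates in ℝ³. -/

import Mathlib

/-- The golden ratio. -/
noncomputable def goldenR : ℝ := (1 + Real.sqrt 5) / 2

/-- The vertices of the standard regular dodecahedron: the points `(±1, ±1, ±1)` together
with all cyclic permutations of `(0, ±1/φ, ±φ)`, `φ` the golden ratio. -/
noncomputable def stdDodecahedron : Set (EuclideanSpace ℝ (Fin 3)) :=
  {v | ∃ s t u : ℝ, (s = 1 ∨ s = -1) ∧ (t = 1 ∨ t = -1) ∧ (u = 1 ∨ u = -1) ∧
    (v = (WithLp.equiv 2 (Fin 3 → ℝ)).symm ![s, t, u] ∨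
     v = (WithLp.equiv 2 (Fin 3 → ℝ)).symm ![0, s / goldenR, t * goldenR] ∨
     v = (WithLp.equiv 2 (Fin 3 → ℝ)).symm ![s / goldenR, t * goldenR, 0] ∨
     v = (WithLp.equiv 2 (Fin 3 → ℝ)).symm ![t * goldenR, 0, s / goldenR])}

/-- A set `S ⊆ ℝ³` is (the vertex set of) a regular dodecahedron if it is the image of the
standard dodecahedron's vertex set under a similarity transformation of `ℝ³`. -/
def IsRegularDodecahedron (S : Set (EuclideanSpace ℝ (Fin 3))) : Prop :=
  ∃ (r : ℝ) (f : EuclideanSpace ℝ (Fin 3) → EuclideanSpace ℝ (Fin 3)), 0 < r ∧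
    (∀ p ∈ stdDodecahedron, ∀ q ∈ stdDodecahedron, dist (f p) (f q) = r * dist p q) ∧
    S = f '' stdDodecahedron

/-!
Squared distances between lattice points are integers, so their ratios are rational, and a
similarity preserves ratios of squared distances. In the standard dodecahedron, however, the
squared edge length `4 / φ²` and the squared edge length `4` of the inscribed cube `(±1, ±1, ±1)`
have the irrational ratio `1 / φ² = 2 - φ`.
-/

open Real goldenRatio

theorem goldenR_eq_goldenRatio : goldenR = φ := rfl

theorem EuclideanSpace.exists_int_dist_sq_eq {ι : Type*} [Fintype ι] {x y : EuclideanSpace ℝ ι}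
    (hx : ∀ i, ∃ z : ℤ, x i = z) (hy : ∀ i, ∃ z : ℤ, y i = z) :
    ∃ k : ℤ, dist x y ^ 2 = k := by
  choose a ha using hx
  choose b hb using hy
  refine ⟨∑ i, (a i - b i) ^ 2, ?_⟩
  simp [PiLp.dist_sq_eq_of_L2, Real.dist_eq, sq_abs, ha, hb]

theorem EuclideanSpace.not_irrational_dist_sq_div_dist_sq {ι : Type*} [Fintype ι]
    {x y x' y' : EuclideanSpace ℝ ι} (hx : ∀ i, ∃ z : ℤ, x i = z) (hy : ∀ i, ∃ z : ℤ, y i = z)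
    (hx' : ∀ i, ∃ z : ℤ, x' i = z) (hy' : ∀ i, ∃ z : ℤ, y' i = z) :
    ¬ Irrational (dist x y ^ 2 / dist x' y' ^ 2) := by
  obtain ⟨k, hk⟩ := exists_int_dist_sq_eq hx hy
  obtain ⟨l, hl⟩ := exists_int_dist_sq_eq hx' hy'
  rw [hk, hl]
  exact fun h ↦ h ⟨k / l, by push_cast; rfl⟩

theorem dist_sq_div_dist_sq_of_dist_eq_mul {α β : Type*} [PseudoMetricSpace α]
    [PseudoMetricSpace β] {f : α → β} {r : ℝ} (hr : r ≠ 0) {p q p' q' : α}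
    (hpq : dist (f p) (f q) = r * dist p q) (hpq' : dist (f p') (f q') = r * dist p' q') :
    dist (f p) (f q) ^ 2 / dist (f p') (f q') ^ 2 = dist p q ^ 2 / dist p' q' ^ 2 := by
  rw [hpq, hpq', mul_pow, mul_pow, mul_div_mul_left _ _ (pow_ne_zero 2 hr)]

theorem exists_irrational_dist_sq_div_dist_sq_stdDodecahedron :
    ∃ p ∈ stdDodecahedron, ∃ q ∈ stdDodecahedron, ∃ p' ∈ stdDodecahedron,
      ∃ q' ∈ stdDodecahedron, Irrational (dist p q ^ 2 / dist p' q' ^ 2) := by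
  let P := (WithLp.equiv 2 (Fin 3 → ℝ)).symm ![1, 1, 1]
  let Q := (WithLp.equiv 2 (Fin 3 → ℝ)).symm ![0, 1 / goldenR, 1 * goldenR]
  let Q' := (WithLp.equiv 2 (Fin 3 → ℝ)).symm ![1, 1, -1]
  have hP : P ∈ stdDodecahedron := ⟨1, 1, 1, .inl rfl, .inl rfl, .inl rfl, .inl rfl⟩
  have hQ : Q ∈ stdDodecahedron := ⟨1, 1, 1, .inl rfl, .inl rfl, .inl rfl, .inr (.inl rfl)⟩
  have hQ' : Q' ∈ stdDodecahedron := ⟨1, 1, -1, .inl rfl, .inl rfl, .inr rfl, .inl rfl⟩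
  have hPQ : dist P Q ^ 2 = 8 - 4 * φ := by
    have hinv : 1 / goldenR = φ - 1 := by
      rw [goldenR_eq_goldenRatio, one_div, inv_goldenRatio]
      linarith [goldenRatio_add_goldenConj]
    simp only [P, Q, PiLp.dist_sq_eq_of_L2, Fin.sum_univ_three, Real.dist_eq, sq_abs, hinv,
      WithLp.equiv_symm_apply, Matrix.cons_val_zero, Matrix.cons_val_one, Matrix.cons_val_two,
      Matrix.head_cons, Matrix.tail_cons, one_mul]
    rw [goldenR_eq_goldenRatio]
    linear_combination 2 * goldenRatio_sq
  have hPQ' : dist P Q' ^ 2 = 4 := by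
    norm_num [P, Q', PiLp.dist_sq_eq_of_L2, Fin.sum_univ_three, Real.dist_eq, Matrix.cons_val_two]
  refine ⟨P, hP, Q, hQ, P, hP, Q', hQ', ?_⟩
  rw [hPQ, hPQ', show (8 - 4 * φ) / 4 = (2 : ℕ) - φ by push_cast; ring]
  exact goldenRatio_irrational.natCast_sub 2

/-- There is no regular dodecahedron all of whose vertices have integer coordinates. -/
theorem no_integer_regular_dodecahedron :
    ¬ ∃ S : Set (EuclideanSpace ℝ (Fin 3)),
      IsRegularDodecahedron S ∧ ∀ v ∈ S, ∀ i : Fin 3, ∃ z : ℤ, v i = z := by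
  rintro ⟨S, ⟨r, f, hr, hf, rfl⟩, hint⟩
  obtain ⟨p, hp, q, hq, p', hp', q', hq', hirr⟩ :=
    exists_irrational_dist_sq_div_dist_sq_stdDodecahedron
  rw [← dist_sq_div_dist_sq_of_dist_eq_mul hr.ne' (hf p hp q hq) (hf p' hp' q' hq')] at hirr
  exact EuclideanSpace.not_irrational_dist_sq_div_dist_sq (hint _ ⟨p, hp, rfl⟩)
    (hint _ ⟨q, hq, rfl⟩) (hint _ ⟨p', hp', rfl⟩) (hint _ ⟨q', hq', rfl⟩) hirr
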